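/- Let η ∈ (0,1] and M > 0. Then the functional J_η[ρ] := ∫_{ℝ²} ρ log(ρ/M) dx + η ∫_{ℝ²} log(1+|x|²) ρ(x) dx is unbounded from below on the set of measurable nonnegative functions ρ on ℝ² with ∫_{ℝ²} ρ dx = M: for every C ∈ ℝ there exists such a ρ, with ρ log ρ and log(1+|x|²)ρ integrable, satisfying J_η[ρ] < C. -/

import Mathlib

open MeasureTheory Real

noncomputable section

abbrev R2 : Type := EuclideanSpace ℝ (Fin 2)

/-!
For `ζ > 1` the density `ρ_ζ x = (ζ - 1) / π * (1 + |x|²) ^ (-ζ)` has mass one, and for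
`ρ = M ρ_ζ` one has `log (ρ / M) = log ((ζ - 1) / π) - ζ log (1 + |x|²)`. Hence
`J_η[ρ] = M log ((ζ - 1) / π) - (ζ - η) ∫ log (1 + |x|²) ρ ≤ M log ((ζ - 1) / π)`,
since `η ≤ 1 < ζ`, and the right-hand side tends to `-∞` as `ζ → 1₊`.
-/

section OneAddNormSq

open Module

variable {E : Type*} [NormedAddCommGroup E] [NormedSpace ℝ E] [FiniteDimensional ℝ E]
  [MeasurableSpace E] [BorelSpace E] {μ : Measure E} [μ.IsAddHaarMeasure]

lemma integrable_one_add_norm_sq_rpow_neg {p : ℝ} (hp : (finrank ℝ E : ℝ) < 2 * p) :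
    Integrable (fun x : E => (1 + ‖x‖ ^ 2) ^ (-p)) μ := by
  simpa [neg_div] using integrable_rpow_neg_one_add_norm_sq (μ := μ) hp

lemma integrable_log_one_add_norm_sq_mul_rpow_neg {p : ℝ} (hp : (finrank ℝ E : ℝ) < 2 * p) :
    Integrable (fun x : E => log (1 + ‖x‖ ^ 2) * (1 + ‖x‖ ^ 2) ^ (-p)) μ := by
  set s := (2 * p - finrank ℝ E) / 4
  have hs : 0 < s := by positivity
  have hps : (finrank ℝ E : ℝ) < 2 * (p - s) := by simp only [s]; linarith
  refine ((integrable_one_add_norm_sq_rpow_neg (μ := μ) hps).div_const s).mono'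
    (by fun_prop) (ae_of_all _ fun x => ?_)
  have hu : 1 ≤ 1 + ‖x‖ ^ 2 := le_add_of_nonneg_right (by positivity)
  have hu₀ : 0 < 1 + ‖x‖ ^ 2 := by positivity
  rw [norm_of_nonneg (mul_nonneg (log_nonneg hu) (by positivity))]
  -- `log u ≤ u ^ s / s` trades a logarithm for an arbitrarily small power
  calc log (1 + ‖x‖ ^ 2) * (1 + ‖x‖ ^ 2) ^ (-p)
      ≤ (1 + ‖x‖ ^ 2) ^ s / s * (1 + ‖x‖ ^ 2) ^ (-p) := by
        gcongr; exact log_le_rpow_div hu₀.le hs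
    _ = (1 + ‖x‖ ^ 2) ^ (-(p - s)) / s := by
        rw [div_mul_eq_mul_div, ← rpow_add hu₀]; ring_nf

end OneAddNormSq

lemma integral_Ioi_mul_one_add_sq_rpow_neg {p : ℝ} (hp : 1 < p) :
    ∫ y in Set.Ioi (0 : ℝ), y * (1 + y ^ 2) ^ (-p) = 1 / (2 * (p - 1)) := by
  have hp₁ : p - 1 ≠ 0 := by linarith
  set F : ℝ → ℝ := fun y => -(1 + y ^ 2) ^ (1 - p) / (2 * (p - 1))
  have hF : ∀ y ∈ Set.Ici (0 : ℝ), HasDerivAt F (y * (1 + y ^ 2) ^ (-p)) y := by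
    intro y _
    have h := ((((hasDerivAt_pow 2 y).const_add 1).rpow_const (p := 1 - p)
      (Or.inl (by positivity))).neg).div_const (2 * (p - 1))
    refine h.congr_deriv ?_
    rw [show 1 - p - 1 = -p by ring]
    field_simp
    ring
  have hF_top : Filter.Tendsto F Filter.atTop (nhds 0) := by
    have h := (((tendsto_rpow_neg_atTop (by linarith : 0 < p - 1)).comp
      (Filter.tendsto_atTop_add_const_left _ 1
        (Filter.tendsto_pow_atTop two_ne_zero))).neg).div_const (2 * (p - 1))
    simpa [F] using h
  rw [integral_Ioi_of_hasDerivAt_of_nonneg' hF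
    (fun y hy => mul_nonneg (le_of_lt hy) (by positivity)) hF_top]
  have hF₀ : F 0 = -1 / (2 * (p - 1)) := by simp [F]
  rw [hF₀]; ring

lemma integral_one_add_norm_sq_rpow_neg {p : ℝ} (hp : 1 < p) :
    ∫ x : R2, (1 + ‖x‖ ^ 2) ^ (-p) = π / (p - 1) := by
  have hp₁ : p - 1 ≠ 0 := by linarith
  rw [integral_fun_norm_addHaar volume fun y => (1 + y ^ 2) ^ (-p), finrank_euclideanSpace_fin]
  simp [measureReal_def, integral_Ioi_mul_one_add_sq_rpow_neg hp, pi_nonneg, field]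

section PowerLawDensity

variable {ζ : ℝ}

/-- The paper's `ρ_ζ`, a probability density for `ζ > 1`. -/
def powerLawDensity (ζ : ℝ) (x : R2) : ℝ := (ζ - 1) / π * (1 + ‖x‖ ^ 2) ^ (-ζ)

lemma measurable_powerLawDensity (ζ : ℝ) : Measurable (powerLawDensity ζ) := by
  unfold powerLawDensity; fun_prop

lemma powerLawDensity_pos (hζ : 1 < ζ) (x : R2) : 0 < powerLawDensity ζ x := by
  have : 0 < ζ - 1 := by linarith
  unfold powerLawDensity; positivity

lemma finrank_R2_lt_two_mul (hζ : 1 < ζ) : (Module.finrank ℝ R2 : ℝ) < 2 * ζ := by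
  rw [finrank_euclideanSpace_fin]; push_cast; linarith

lemma integrable_powerLawDensity (hζ : 1 < ζ) : Integrable (powerLawDensity ζ) :=
  (integrable_one_add_norm_sq_rpow_neg (finrank_R2_lt_two_mul hζ)).const_mul _

lemma integral_powerLawDensity (hζ : 1 < ζ) : ∫ x, powerLawDensity ζ x = 1 := by
  have : ζ - 1 ≠ 0 := by linarith
  simp only [powerLawDensity]
  rw [integral_const_mul, integral_one_add_norm_sq_rpow_neg hζ]
  field_simp

lemma integrable_log_one_add_norm_sq_mul_powerLawDensity (hζ : 1 < ζ) :
    Integrable (fun x => log (1 + ‖x‖ ^ 2) * powerLawDensity ζ x) := by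
  simpa only [powerLawDensity, mul_left_comm] using
    (integrable_log_one_add_norm_sq_mul_rpow_neg (μ := volume)
      (finrank_R2_lt_two_mul hζ)).const_mul ((ζ - 1) / π)

lemma log_powerLawDensity (hζ : 1 < ζ) (x : R2) :
    log (powerLawDensity ζ x) = log ((ζ - 1) / π) - ζ * log (1 + ‖x‖ ^ 2) := by
  have : 0 < ζ - 1 := by linarith
  rw [powerLawDensity, log_mul (by positivity) (by positivity), log_rpow (by positivity)]
  ring

variable {M : ℝ}

lemma integrable_mul_log_mul_powerLawDensity (hζ : 1 < ζ) (hM : M ≠ 0) :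
    Integrable (fun x => M * powerLawDensity ζ x * log (M * powerLawDensity ζ x)) := by
  have h : ∀ x, M * powerLawDensity ζ x * log (M * powerLawDensity ζ x) =
      (log M + log ((ζ - 1) / π)) * M * powerLawDensity ζ x -
        ζ * M * (log (1 + ‖x‖ ^ 2) * powerLawDensity ζ x) := fun x => by
    rw [log_mul hM (powerLawDensity_pos hζ x).ne', log_powerLawDensity hζ]; ring
  simp_rw [h]
  exact ((integrable_powerLawDensity hζ).const_mul _).sub
    ((integrable_log_one_add_norm_sq_mul_powerLawDensity hζ).const_mul _)

lemma integral_mul_log_div_powerLawDensity (hζ : 1 < ζ) (hM : M ≠ 0) :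
    ∫ x, M * powerLawDensity ζ x * log (M * powerLawDensity ζ x / M) =
      M * log ((ζ - 1) / π) - ζ * ∫ x, log (1 + ‖x‖ ^ 2) * (M * powerLawDensity ζ x) := by
  have h : ∀ x, M * powerLawDensity ζ x * log (M * powerLawDensity ζ x / M) =
      M * log ((ζ - 1) / π) * powerLawDensity ζ x -
        ζ * (log (1 + ‖x‖ ^ 2) * (M * powerLawDensity ζ x)) := fun x => by
    rw [mul_div_cancel_left₀ _ hM, log_powerLawDensity hζ]; ring
  simp_rw [h]
  rw [integral_sub ((integrable_powerLawDensity hζ).const_mul _)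
      (((integrable_log_one_add_norm_sq_mul_powerLawDensity hζ).const_mul M).const_mul ζ |>.congr
        (ae_of_all _ fun x => by ring)),
    integral_const_mul, integral_const_mul, integral_powerLawDensity hζ, mul_one]

end PowerLawDensity

theorem stmt_3_general (η M : ℝ) (hη₁ : η ≤ 1) (hM : 0 < M) :
    ∀ C : ℝ, ∃ ρ : R2 → ℝ, Measurable ρ ∧ (∀ x, 0 ≤ ρ x) ∧ Integrable ρ ∧
      (∫ x : R2, ρ x) = M ∧
      Integrable (fun x : R2 => ρ x * Real.log (ρ x)) ∧
      Integrable (fun x : R2 => Real.log (1 + ‖x‖ ^ 2) * ρ x) ∧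
      (∫ x : R2, ρ x * Real.log (ρ x / M)) +
        η * (∫ x : R2, Real.log (1 + ‖x‖ ^ 2) * ρ x) < C := by
  intro C
  -- choose `ζ` so that the entropy part `M log ((ζ - 1) / π)` equals `C - 1`
  set ζ := 1 + π * exp ((C - 1) / M)
  have hζ : 1 < ζ := by have := mul_pos pi_pos (exp_pos ((C - 1) / M)); linarith
  have hentropy : M * log ((ζ - 1) / π) = C - 1 := by
    rw [add_sub_cancel_left, mul_div_cancel_left₀ _ pi_ne_zero, log_exp]
    field_simp
  have hmoment : 0 ≤ ∫ x : R2, log (1 + ‖x‖ ^ 2) * (M * powerLawDensity ζ x) :=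
    integral_nonneg fun x => mul_nonneg (log_nonneg (by simp))
      (mul_pos hM (powerLawDensity_pos hζ x)).le
  refine ⟨fun x => M * powerLawDensity ζ x, (measurable_powerLawDensity ζ).const_mul M,
    fun x => (mul_pos hM (powerLawDensity_pos hζ x)).le,
    (integrable_powerLawDensity hζ).const_mul M,
    by rw [integral_const_mul, integral_powerLawDensity hζ, mul_one],
    integrable_mul_log_mul_powerLawDensity hζ hM.ne',
    by simpa only [mul_left_comm] using
      (integrable_log_one_add_norm_sq_mul_powerLawDensity hζ).const_mul M, ?_⟩
  rw [integral_mul_log_div_powerLawDensity hζ hM.ne', hentropy]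
  nlinarith [mul_nonneg (by linarith : 0 ≤ ζ - η) hmoment]

theorem stmt_3 (η M : ℝ) (hη₀ : 0 < η) (hη₁ : η ≤ 1) (hM : 0 < M) :
    ∀ C : ℝ, ∃ ρ : R2 → ℝ, Measurable ρ ∧ (∀ x, 0 ≤ ρ x) ∧ Integrable ρ ∧
      (∫ x : R2, ρ x) = M ∧
      Integrable (fun x : R2 => ρ x * Real.log (ρ x)) ∧
      Integrable (fun x : R2 => Real.log (1 + ‖x‖ ^ 2) * ρ x) ∧
      (∫ x : R2, ρ x * Real.log (ρ x / M)) +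
        η * (∫ x : R2, Real.log (1 + ‖x‖ ^ 2) * ρ x) < C :=
  stmt_3_general η M hη₁ hM
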